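/- arXiv:2105.13826 — 9 statements merged into one kernel-verified Lean document; each statement's English description precedes it below -/
import Mathlib

section
/- If p is a prime with p ≡ 3 (mod 4) and p > 3, then p + 1 and 4^p - 1 have no common prime divisor greater than 3. -/
/-! If a prime `π > 3` divides `4 ^ p - 1`, then `4` has order exactly `p` modulo `π` (order `1`
would force `π ∣ 3`), so `p ∣ π - 1`. Together with `π ∣ p + 1` this forces `π = p + 1`, and two
consecutive primes are `2` and `3`, contradicting `π > 3`. -/

theorem ZMod.natCast_eq_one_iff_dvd_sub_one {n a : ℕ} (ha : 1 ≤ a) :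
    (a : ZMod n) = 1 ↔ n ∣ a - 1 := by
  rw [← Nat.cast_one, ZMod.natCast_eq_natCast_iff, Nat.ModEq.comm, Nat.modEq_iff_dvd' ha]

theorem Nat.Prime.dvd_sub_one_of_dvd_pow_sub_one {p q a : ℕ} (hp : p.Prime) (hq : q.Prime)
    (hpow : q ∣ a ^ p - 1) (hq_not_dvd : ¬ q ∣ a - 1) : p ∣ q - 1 := by
  have := Fact.mk hp
  have := Fact.mk hq
  have ha : 1 ≤ a := Nat.one_le_iff_ne_zero.mpr fun h ↦ hq_not_dvd (by simp [h])
  have hpow_one : (a : ZMod q) ^ p = 1 := by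
    exact_mod_cast (ZMod.natCast_eq_one_iff_dvd_sub_one (Nat.one_le_pow _ _ ha)).mpr hpow
  have hne_one : (a : ZMod q) ≠ 1 := mt (ZMod.natCast_eq_one_iff_dvd_sub_one ha).mp hq_not_dvd
  have hne_zero : (a : ZMod q) ≠ 0 := by
    rintro h
    simp [h, hp.ne_zero] at hpow_one
  rw [← orderOf_eq_prime hpow_one hne_one]
  exact ZMod.orderOf_dvd_card_sub_one hne_zero

theorem no_common_prime_divisor_prime_case_general (p : ℕ) (hp : p.Prime) :
    ¬ ∃ π : ℕ, π.Prime ∧ 3 < π ∧ π ∣ p + 1 ∧ π ∣ 4 ^ p - 1 := by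
  rintro ⟨π, hπ, hπ3, hπp, hπ4⟩
  have hπ_not_dvd : ¬ π ∣ 4 - 1 := fun h ↦ by
    have := Nat.le_of_dvd (by norm_num) h
    omega
  have hpπ : p ∣ π - 1 := hp.dvd_sub_one_of_dvd_pow_sub_one hπ hπ4 hπ_not_dvd
  have hπ_eq : π = p + 1 := by
    have := Nat.le_of_dvd (by omega) hpπ
    have := Nat.le_of_dvd (by omega) hπp
    omega
  have := hp.eq_two_or_odd
  have := hπ.eq_two_or_odd
  omega

theorem no_common_prime_divisor_prime_case (p : ℕ) (hp : p.Prime) (hp4 : p % 4 = 3)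
    (hp3 : 3 < p) :
    ¬ ∃ π : ℕ, π.Prime ∧ 3 < π ∧ π ∣ p + 1 ∧ π ∣ 4 ^ p - 1 :=
  no_common_prime_divisor_prime_case_general p hp
end

section
/- If p and q = p + 2 are both prime and n = p*q, then n + 1 and 4^n - 1 have no common prime divisor greater than 3. -/
/-!
A prime `π > 3` dividing `n + 1 = (p + 1) ^ 2` divides `p + 1`, and since `p + 1` is even while `π`
is odd, `π - 1 < p`. Hence `n = p (p + 2)` is coprime to `π - 1 = #(ZMod π)ˣ`, so `x ↦ x ^ n` is
injective on `(ZMod π)ˣ`, and `4 ^ n ≡ 1` forces `4 ≡ 1 [MOD π]`, i.e. `π ∣ 3`.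
-/

theorem Nat.Prime.dvd_sub_one_of_dvd_pow_sub_one_s2 {π a n : ℕ} (hπ : π.Prime)
    (hn : n.Coprime (π - 1)) (ha : ¬ π ∣ a) (h : π ∣ a ^ n - 1) : π ∣ a - 1 := by
  have := Fact.mk hπ
  have ha0 : (a : ZMod π) ≠ 0 := by rwa [Ne, ZMod.natCast_eq_zero_iff]
  have ha1 : 1 ≤ a := Nat.one_le_iff_ne_zero.mpr (by rintro rfl; exact ha (dvd_zero π))
  rw [← Nat.modEq_iff_dvd' (Nat.one_le_pow _ _ ha1), ← ZMod.natCast_eq_natCast_iff,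
    Nat.cast_one, Nat.cast_pow, eq_comm] at h
  have : (a : ZMod π) = 1 :=
    (pow_eq_one_iff_of_coprime hn).mp ⟨h, ZMod.pow_card_sub_one_eq_one ha0⟩
  rwa [← Nat.modEq_iff_dvd' ha1, ← ZMod.natCast_eq_natCast_iff, Nat.cast_one, eq_comm]

theorem coprime_mul_add_two_sub_one_of_dvd_add_one {p π : ℕ} (hp : p.Prime)
    (hq : (p + 2).Prime) (hπ : π.Prime) (hπ2 : π ≠ 2) (h : π ∣ p + 1) :
    (p * (p + 2)).Coprime (π - 1) := by
  have hp_odd : Odd p := hp.odd_of_ne_two (by rintro rfl; norm_num at hq)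
  have hπ_lt : π < p + 1 := by
    refine lt_of_le_of_ne (Nat.le_of_dvd p.succ_pos h) ?_
    rintro rfl
    exact Nat.not_even_iff_odd.mpr (hπ.odd_of_ne_two hπ2) hp_odd.add_one
  have hπ1 : π - 1 ≠ 0 := by have := hπ.two_le; omega
  exact (Nat.coprime_of_lt_prime hπ1 (by omega) hp).mul_left
    (Nat.coprime_of_lt_prime hπ1 (by omega) hq)

theorem no_common_prime_divisor_twin_prime_case (p n : ℕ) (hp : p.Prime)
    (hq : (p + 2).Prime) (hn : n = p * (p + 2)) :
    ¬ ∃ π : ℕ, π.Prime ∧ 3 < π ∧ π ∣ n + 1 ∧ π ∣ 4 ^ n - 1 := by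
  rintro ⟨π, hπ, hπ3, hπn, hπ4⟩
  subst hn
  have hπp : π ∣ p + 1 := hπ.dvd_of_dvd_pow (n := 2) (by convert hπn using 1; ring)
  have hπ_not_dvd_four : ¬ π ∣ 4 := fun h => by
    have := Nat.le_of_dvd four_pos h
    interval_cases π; norm_num at hπ
  have hπ_dvd_three : π ∣ 4 - 1 := hπ.dvd_sub_one_of_dvd_pow_sub_one_s2
    (coprime_mul_add_two_sub_one_of_dvd_add_one hp hq hπ (by omega) hπp) hπ_not_dvd_four hπ4
  have := Nat.le_of_dvd three_pos hπ_dvd_three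
  omega
end

section
/- If p and q = p + 2 are odd primes, then gcd(4^p + 1, 4^q + 1) = 5. -/
/-!
Let `d = gcd (a ^ n + 1) (a ^ (n + 2) + 1)`. As `a ^ 2 * (a ^ n + 1) - (a ^ (n + 2) + 1) = a ^ 2 - 1`,
`d` divides `(a + 1) * (a - 1)`. For odd `n`, `a + 1` divides `d`; for even `a`, `d` is coprime to
`a - 1`, because `a ^ n + 1 ≡ 2 [MOD a - 1]` and `a - 1` is odd. Hence `d = a + 1`, which is `5`
for `a = 4`.
-/

namespace Nat

theorem gcd_pow_add_one_pow_add_two_add_one_dvd (a n : ℕ) :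
    gcd (a ^ n + 1) (a ^ (n + 2) + 1) ∣ a ^ 2 - 1 := by
  have hcomb : a ^ 2 * (a ^ n + 1) - (a ^ (n + 2) + 1) = a ^ 2 - 1 := by
    rw [mul_add, mul_one, ← pow_add, add_comm 2 n]
    omega
  exact hcomb ▸ Nat.dvd_sub (dvd_mul_of_dvd_right (gcd_dvd_left _ _) _) (gcd_dvd_right _ _)

theorem coprime_pow_add_one_sub_one {a n : ℕ} (ha : Even a) (hn : n ≠ 0) :
    Coprime (a ^ n + 1) (a - 1) := by
  rcases a.eq_zero_or_pos with rfl | ha₀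
  · simp [hn]
  have hmod : a ^ n + 1 ≡ 2 [MOD a - 1] := by
    simpa using ((Nat.modEq_sub ha₀).pow n).add_right 1
  rw [Coprime, hmod.gcd_eq, ← Coprime, coprime_two_left]
  exact Nat.Even.sub_odd ha₀ ha odd_one

theorem gcd_pow_add_one_pow_add_two_add_one {a n : ℕ} (ha : Even a) (hn : Odd n) :
    gcd (a ^ n + 1) (a ^ (n + 2) + 1) = a + 1 := by
  have hdvd_sq := gcd_pow_add_one_pow_add_two_add_one_dvd a n
  rw [show a ^ 2 - 1 = a ^ 2 - 1 ^ 2 by rw [one_pow], sq_sub_sq] at hdvd_sq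
  have hcop : Coprime (gcd (a ^ n + 1) (a ^ (n + 2) + 1)) (a - 1) :=
    (coprime_pow_add_one_sub_one ha hn.pos.ne').coprime_dvd_left (gcd_dvd_left _ _)
  refine dvd_antisymm (hcop.dvd_of_dvd_mul_right hdvd_sq) (dvd_gcd ?_ ?_)
  · simpa using hn.nat_add_dvd_pow_add_pow a 1
  · simpa using (hn.add_even even_two).nat_add_dvd_pow_add_pow a 1

end Nat

theorem gcd_twin_prime_pow_add_one_general (p : ℕ)
    (hodd : Odd p) : Nat.gcd (4 ^ p + 1) (4 ^ (p + 2) + 1) = 5 :=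
  Nat.gcd_pow_add_one_pow_add_two_add_one (by decide) hodd

theorem gcd_twin_prime_pow_add_one (p : ℕ) (hp : p.Prime) (hq : (p + 2).Prime)
    (hodd : Odd p) : Nat.gcd (4 ^ p + 1) (4 ^ (p + 2) + 1) = 5 :=
  gcd_twin_prime_pow_add_one_general p hodd
end

section
/- Let n ≡ 3 (mod 4), and let s : ZMod n → {±1} have ideal autocorrelation. Then for any prime π ≥ 7 dividing 4^n - 1, (∑_{λ=0}^{n-1} s(λ) 4^(2λ)) * (∑_{μ=0}^{n-1} s(μ) 4^(-2μ)) ≡ n + 1 (mod π), where 4^(-1) denotes the inverse of 4 modulo π. -/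
/-!
With `ψ x = 16 ^ x` an additive character of `ZMod n` into `ZMod π` (legitimate since `16 ^ n = 1`),
the two sums are `∑ s x ψ x` and `∑ s y ψ (-y)`, whose product is the Fourier transform
`∑ₜ C(t) ψ t` of the periodic autocorrelation `C` of `s`. As `C` is `n` at `0` and `-1`
elsewhere, and `ψ` is nontrivial (`π ∤ 15`), so that `∑ₜ ψ t = 0`, this equals `n + 1`.
-/

open Finset

def periodicAutocorrelation {G R : Type*} [Add G] [Fintype G] [CommSemiring R] (f : G → R)
    (t : G) : R :=
  ∑ x, f x * f (x + t)

section Autocorrelation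

variable {G R : Type*} [AddCommGroup G] [Fintype G]

lemma periodicAutocorrelation_zero [CommSemiring R] {f : G → R} (hf : ∀ x, f x * f x = 1) :
    periodicAutocorrelation f 0 = Fintype.card G := by
  simp [periodicAutocorrelation, hf]

lemma sum_mul_sum_map_neg_eq_sum_periodicAutocorrelation [CommSemiring R] (ψ : AddChar G R)
    (f : G → R) :
    (∑ x, f x * ψ x) * (∑ y, f y * ψ (-y)) = ∑ t, periodicAutocorrelation f t * ψ t := by
  have hψ : ∀ y t, ψ (y + t) * ψ (-y) = ψ t := fun y t => by
    rw [← AddChar.map_add_eq_mul, add_neg_cancel_comm]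
  calc (∑ x, f x * ψ x) * (∑ y, f y * ψ (-y))
      = ∑ y, ∑ t, f (y + t) * ψ (y + t) * (f y * ψ (-y)) := by
        rw [sum_mul_sum, sum_comm]
        exact sum_congr rfl fun y _ => (Equiv.sum_comp (Equiv.addLeft y) _).symm
    _ = ∑ t, ∑ y, f y * f (y + t) * ψ t := by
        rw [sum_comm]
        refine sum_congr rfl fun t _ => sum_congr rfl fun y _ => ?_
        rw [← hψ y t]
        ring
    _ = ∑ t, periodicAutocorrelation f t * ψ t := by
        simp only [periodicAutocorrelation, sum_mul]

lemma sum_mul_map_eq_add_one_of_eq_neg_one [CommRing R] [IsDomain R] {ψ : AddChar G R}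
    (hψ : ψ ≠ 1) {g : G → R} (hg : ∀ t ≠ 0, g t = -1) :
    ∑ t, g t * ψ t = g 0 + 1 := by
  have hshift : ∑ t, g t * ψ t = ∑ t, (g t + 1) * ψ t := by
    simp only [add_mul, one_mul, sum_add_distrib, AddChar.sum_eq_zero_of_ne_one hψ, add_zero]
  rw [hshift, sum_eq_single 0 (fun t _ ht => by rw [hg t ht, neg_add_cancel, zero_mul])
    (fun h => absurd (mem_univ 0) h), AddChar.map_zero_eq_one, mul_one]

end Autocorrelation

section RangeSums

variable {n : ℕ} [NeZero n]

lemma sum_range_natCast_eq_sum_zmod {M : Type*} [AddCommMonoid M] (f : ZMod n → M) :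
    ∑ l ∈ range n, f (l : ZMod n) = ∑ x, f x :=
  sum_nbij' (fun l : ℕ => (l : ZMod n)) ZMod.val (fun _ _ => mem_univ _)
    (fun x _ => mem_range.mpr x.val_lt) (fun _ hl => ZMod.val_natCast_of_lt (mem_range.mp hl))
    (fun x _ => ZMod.natCast_zmod_val x) (fun _ _ => rfl)

lemma sum_range_mul_pow_eq_sum_zmodChar {R : Type*} [CommSemiring R] {ζ : R} (hζ : ζ ^ n = 1)
    (f : ZMod n → R) : ∑ l ∈ range n, f l * ζ ^ l = ∑ x, f x * AddChar.zmodChar n hζ x := by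
  rw [← sum_range_natCast_eq_sum_zmod]
  simp only [AddChar.zmodChar_apply']

lemma sum_range_mul_inv_pow_eq_sum_zmodChar_neg {K : Type*} [Field K] {ζ : K} (hζ : ζ ^ n = 1)
    (f : ZMod n → K) :
    ∑ l ∈ range n, f l * ζ⁻¹ ^ l = ∑ x, f x * AddChar.zmodChar n hζ (-x) := by
  rw [← sum_range_natCast_eq_sum_zmod]
  simp only [AddChar.map_neg_eq_inv, AddChar.zmodChar_apply', inv_pow]

end RangeSums

lemma ZMod.natCast_pow_eq_one_of_dvd {p a n : ℕ} (ha : 0 < a) (h : p ∣ a ^ n - 1) :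
    (a : ZMod p) ^ n = 1 := by
  have hpos : 1 ≤ a ^ n := Nat.one_le_pow _ _ ha
  exact_mod_cast (ZMod.natCast_eq_natCast_iff _ _ _).mpr ((Nat.modEq_iff_dvd' hpos).mpr h).symm

lemma four_sq_ne_one_of_seven_le {p : ℕ} (hp : p.Prime) (h7 : 7 ≤ p) : (4 : ZMod p) ^ 2 ≠ 1 := by
  intro h
  have h15 : ((15 : ℕ) : ZMod p) = 0 := by
    push_cast
    linear_combination h
  have hdvd : p ∣ 3 * 5 := (ZMod.natCast_eq_zero_iff _ _).mp h15
  rcases hp.dvd_mul.mp hdvd with h | h <;> have := Nat.le_of_dvd (by norm_num) h <;> omega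

theorem ideal_autocorrelation_gauss_like (n : ℕ) (hn : n % 4 = 3) (s : ZMod n → ℤ)
    (hs : ∀ x, s x = 1 ∨ s x = -1)
    (hauto : ∀ τ : ZMod n, τ ≠ 0 →
      ∑ l ∈ Finset.range n, s (l : ZMod n) * s ((l : ZMod n) + τ) = -1)
    (π : ℕ) (hπ : π.Prime) (hπ7 : 7 ≤ π) (hdvd : π ∣ 4 ^ n - 1) :
    (∑ l ∈ Finset.range n, ((s (l : ZMod n) : ZMod π) * 4 ^ (2 * l))) *
      (∑ m ∈ Finset.range n, ((s (m : ZMod n) : ZMod π) * ((4 : ZMod π)⁻¹) ^ (2 * m))) =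
      (n : ZMod π) + 1 := by
  have : Fact π.Prime := ⟨hπ⟩
  have : NeZero n := ⟨by omega⟩
  have h4 : (4 : ZMod π) ^ n = 1 := by
    exact_mod_cast ZMod.natCast_pow_eq_one_of_dvd (by norm_num) hdvd
  have h4sq : ((4 : ZMod π) ^ 2) ^ n = 1 := by rw [← pow_mul, mul_comm, pow_mul, h4, one_pow]
  have hψ : AddChar.zmodChar n h4sq ≠ 1 := by
    rw [AddChar.zmod_char_ne_one_iff, ← Nat.cast_one, AddChar.zmodChar_apply', pow_one]
    exact four_sq_ne_one_of_seven_le hπ hπ7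
  set f : ZMod n → ZMod π := fun x => (s x : ZMod π)
  have hC0 : periodicAutocorrelation f 0 = n := by
    rw [periodicAutocorrelation_zero, ZMod.card]
    intro x
    rcases hs x with h | h <;> simp [f, h]
  have hC : ∀ t ≠ 0, periodicAutocorrelation f t = -1 := fun t ht => by
    rw [periodicAutocorrelation, ← sum_range_natCast_eq_sum_zmod]
    have := congrArg (Int.cast : ℤ → ZMod π) (hauto t ht)
    push_cast at this
    exact this
  simp_rw [pow_mul]
  rw [inv_pow, sum_range_mul_pow_eq_sum_zmodChar h4sq f, sum_range_mul_inv_pow_eq_sum_zmodChar_neg h4sq f,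
    sum_mul_sum_map_neg_eq_sum_periodicAutocorrelation,
    sum_mul_map_eq_add_one_of_eq_neg_one hψ hC, hC0]
end

section
/- Let q = 2^k with k ≥ 2, n = q - 1, θ a primitive element of F_q, and T : F_q → F_2 the trace map. Let R = ∑_{λ=0}^{n-1} (-1)^(T(θ^λ)) 4^(2λ) and R̄ = ∑_{λ=0}^{n-1} (-1)^(T(θ^λ)) 4^(-2λ) computed in Z/(4^(2n)-1). Then R̄ * R ≡ n + 1 - (4^n + 1)/5 (mod 4^n + 1). -/
/-!
Write `ψ x = (-1) ^ Tr x` and `a l = ψ (θ ^ l)`, a sequence of period `n`. Since `4 ^ (2n) = 1`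
modulo `4 ^ n + 1`, the product `R̄ R` is the cyclic correlation `∑_d C d * 16 ^ d` with
`C d = ∑_l a l * a (l + d)`. As `a l * a (l + d) = ψ ((1 + θ ^ d) θ ^ l)` and `θ ^ l` runs over the
nonzero elements of `F`, the orthogonality of the nontrivial character `ψ` gives `C 0 = n` and
`C d = -1` otherwise, so `R̄ R = n + 1 - ∑_{d<n} 16 ^ d`. Finally
`∑_{d<n} 16 ^ d = (4 ^ n - 1) / 3 * ((4 ^ n + 1) / 5)`, and for odd `n` the first factor is `1`
modulo `5`, so the sum is `(4 ^ n + 1) / 5` modulo `4 ^ n + 1`.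
-/

open Finset Function

theorem Function.Periodic.sum_range_add {M : Type*} [AddCommMonoid M] {f : ℕ → M} {n : ℕ}
    (hf : Periodic f n) (l : ℕ) : ∑ m ∈ range n, f (l + m) = ∑ m ∈ range n, f m := by
  induction l with
  | zero => simp only [zero_add]
  | succ l ih =>
    rw [← ih]
    cases n with
    | zero => rfl
    | succ n =>
      rw [sum_range_succ, sum_range_succ' (fun m => f (l + m)), add_zero,
        show l + 1 + n = l + (n + 1) by omega, hf l]
      simp only [add_assoc, add_comm 1]

theorem sum_mul_sum_eq_sum_correlation {R : Type*} [CommSemiring R] {a : ℕ → R} {n : ℕ}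
    (ha : Periodic a n) {u w : R} (hw : w ^ n = 1) (huw : u * w = 1) :
    (∑ l ∈ range n, a l * u ^ l) * (∑ m ∈ range n, a m * w ^ m) =
      ∑ d ∈ range n, (∑ l ∈ range n, a l * a (l + d)) * w ^ d := by
  have hb : Periodic (fun m => a m * w ^ m) n := fun m => by
    simp only [ha m, pow_add, hw, mul_one]
  calc _ = ∑ l ∈ range n, ∑ d ∈ range n, a l * u ^ l * (a (l + d) * w ^ (l + d)) := by
        rw [sum_mul]
        refine sum_congr rfl fun l _ => ?_
        rw [← mul_sum]
        exact congrArg _ (hb.sum_range_add l).symm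
    _ = ∑ l ∈ range n, ∑ d ∈ range n, a l * a (l + d) * w ^ d := by
        refine sum_congr rfl fun l _ => sum_congr rfl fun d _ => ?_
        calc a l * u ^ l * (a (l + d) * w ^ (l + d))
            = a l * a (l + d) * w ^ d * (u * w) ^ l := by ring
          _ = _ := by rw [huw, one_pow, mul_one]
    _ = _ := by rw [sum_comm]; simp only [sum_mul]

theorem sum_range_sixteen_pow_modEq {n : ℕ} (hn : Odd n) :
    ∑ d ∈ range n, 16 ^ d ≡ (4 ^ n + 1) / 5 [MOD 4 ^ n + 1] := by
  obtain ⟨P, hP⟩ : 5 ∣ 4 ^ n + 1 := by simpa using hn.nat_add_dvd_pow_add_pow 4 1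
  obtain ⟨M, hM⟩ : 3 ∣ 4 ^ n - 1 := by simpa using Nat.sub_dvd_pow_sub_pow 4 1 n
  have hgeom : (∑ d ∈ range n, 16 ^ d) * 15 + 1 = (4 ^ n) ^ 2 := by
    rw [← pow_mul, mul_comm n 2, pow_mul]
    exact geom_sum_mul_add 15 n
  have hX : 4 ^ n = 3 * M + 1 := by have := Nat.one_le_pow n 4 (by norm_num); omega
  rw [hX] at hP hgeom
  have hS : ∑ d ∈ range n, 16 ^ d = M * P := by
    nlinarith [congrArg (· * M) hP]
  rw [hS, hX, hP, Nat.mul_div_cancel_left _ (by norm_num), ← Nat.div_add_mod M 5,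
    show M % 5 = 1 by omega, Nat.ModEq,
    show (5 * (M / 5) + 1) * P = P + 5 * P * (M / 5) by ring, Nat.add_mul_mod_self_left]

section FiniteField

variable {F : Type*} [Field F] [Fintype F] [DecidableEq F]

theorem sum_range_orderOf_pow_eq_sum_erase_zero {M : Type*} [AddCommMonoid M] {θ : F}
    (hθ : orderOf θ = Fintype.card F - 1) (g : F → M) :
    ∑ l ∈ range (orderOf θ), g (θ ^ l) = ∑ x ∈ univ.erase 0, g x := by
  have hθ0 : θ ≠ 0 := by
    refine (IsOfFinOrder.isUnit (orderOf_pos_iff.mp ?_)).ne_zero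
    have := Fintype.one_lt_card (α := F)
    omega
  have hinj : Set.InjOn (θ ^ ·) (range (orderOf θ)) := by
    simpa using pow_injOn_Iio_orderOf (x := θ)
  have himage : (range (orderOf θ)).image (θ ^ ·) = univ.erase 0 := by
    refine eq_of_subset_of_card_le (fun x hx => ?_) ?_
    · obtain ⟨l, -, rfl⟩ := mem_image.mp hx
      exact mem_erase.mpr ⟨pow_ne_zero l hθ0, mem_univ _⟩
    · rw [card_image_of_injOn hinj, card_range, card_erase_of_mem (mem_univ _), card_univ, hθ]
  rw [← himage, sum_image hinj]

end FiniteField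

section TraceSign

variable (F : Type*) [Field F] [Algebra (ZMod 2) F]

noncomputable def traceSignChar : AddChar F ℤ :=
  (AddChar.zmodChar 2 (by norm_num : (-1 : ℤ) ^ 2 = 1)).compAddMonoidHom
    (Algebra.trace (ZMod 2) F).toAddMonoidHom

variable {F}

theorem traceSignChar_apply (x : F) :
    traceSignChar F x = (-1) ^ (Algebra.trace (ZMod 2) F x).val := rfl

variable [Fintype F]

theorem traceSignChar_isPrimitive : (traceSignChar F).IsPrimitive := by
  refine AddChar.IsPrimitive.of_ne_one fun h => ?_
  obtain ⟨x, hx⟩ := Algebra.trace_surjective (ZMod 2) F 1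
  simpa [traceSignChar_apply, hx, ZMod.val_one] using DFunLike.congr_fun h x

variable [DecidableEq F] {θ : F}

theorem sum_range_traceSignChar_mul_pow (hθ : orderOf θ = Fintype.card F - 1) (c : F) :
    ∑ l ∈ range (orderOf θ), traceSignChar F (c * θ ^ l) =
      if c = 0 then (orderOf θ : ℤ) else -1 := by
  have hsum := add_sum_erase univ (fun x => traceSignChar F (x * c)) (mem_univ 0)
  rw [AddChar.sum_mulShift c traceSignChar_isPrimitive, zero_mul, AddChar.map_zero_eq_one] at hsum
  simp only [mul_comm c,
    sum_range_orderOf_pow_eq_sum_erase_zero hθ (fun x => traceSignChar F (x * c))]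
  have := Fintype.one_lt_card (α := F)
  split_ifs at hsum ⊢ <;> push_cast [hθ, Nat.cast_sub this.le] at hsum ⊢ <;> linarith

theorem traceSignChar_autocorrelation (hθ : orderOf θ = Fintype.card F - 1) {d : ℕ}
    (hd : d < orderOf θ) :
    ∑ l ∈ range (orderOf θ), traceSignChar F (θ ^ l) * traceSignChar F (θ ^ (l + d)) =
      if d = 0 then (orderOf θ : ℤ) else -1 := by
  have := charP_of_injective_algebraMap (algebraMap (ZMod 2) F).injective 2
  have hc : 1 + θ ^ d = 0 ↔ d = 0 := by
    rw [add_eq_zero_iff_eq_neg, CharTwo.neg_eq, eq_comm]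
    exact ⟨fun h => by_contra fun hd0 => pow_ne_one_of_lt_orderOf hd0 hd h, fun h => by simp [h]⟩
  simp only [← AddChar.map_add_eq_mul, pow_add, ← one_add_mul, mul_comm (θ ^ _) (θ ^ d),
    sum_range_traceSignChar_mul_pow hθ, hc]

theorem traceSignChar_sum_mul_sum (hθ : orderOf θ = Fintype.card F - 1) {R : Type*} [CommRing R]
    {u w : R} (hw : w ^ orderOf θ = 1) (huw : u * w = 1) :
    (∑ l ∈ range (orderOf θ), (traceSignChar F (θ ^ l) : R) * u ^ l) *
      (∑ l ∈ range (orderOf θ), (traceSignChar F (θ ^ l) : R) * w ^ l) =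
      orderOf θ + 1 - ∑ d ∈ range (orderOf θ), w ^ d := by
  have hpos : 0 < orderOf θ := by have := Fintype.one_lt_card (α := F); omega
  have ha : Periodic (fun l => (traceSignChar F (θ ^ l) : R)) (orderOf θ) := fun l => by
    simp only [pow_add, pow_orderOf_eq_one, mul_one]
  have hterm : ∀ d ∈ range (orderOf θ),
      (∑ l ∈ range (orderOf θ), (traceSignChar F (θ ^ l) : R) * traceSignChar F (θ ^ (l + d))) *
        w ^ d = (if d = 0 then (orderOf θ + 1 : R) else 0) - w ^ d := by
    intro d hd
    simp only [← Int.cast_mul, ← Int.cast_sum, traceSignChar_autocorrelation hθ (mem_range.mp hd)]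
    split_ifs with hd0
    · simp [hd0]
    · simp
  rw [sum_mul_sum_eq_sum_correlation ha hw huw, sum_congr rfl hterm, sum_sub_distrib,
    sum_ite_eq' _ _ _, if_pos (mem_range.mpr hpos)]

end TraceSign

theorem m_sequence_gauss_like_general (k : ℕ) (F : Type*) [Field F] [Fintype F]
    [Algebra (ZMod 2) F] (hcard : Fintype.card F = 2 ^ k) (n : ℕ) (hn : n = 2 ^ k - 1)
    (θ : F) (hθ : orderOf θ = n) :
    (∑ l ∈ Finset.range n,
        ((-1 : ZMod (4 ^ n + 1)) ^ (Algebra.trace (ZMod 2) F (θ ^ l)).val *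
          ((4 : ZMod (4 ^ n + 1))⁻¹) ^ (2 * l)) ) *
      (∑ l ∈ Finset.range n,
        ((-1 : ZMod (4 ^ n + 1)) ^ (Algebra.trace (ZMod 2) F (θ ^ l)).val *
          (4 : ZMod (4 ^ n + 1)) ^ (2 * l))) =
      (n : ZMod (4 ^ n + 1)) + 1 - (((4 ^ n + 1) / 5 : ℕ) : ZMod (4 ^ n + 1)) := by
  classical
  have hodd : Odd n := by
    obtain ⟨j, rfl⟩ : ∃ j, k = j + 1 :=
      Nat.exists_eq_succ_of_ne_zero (by rintro rfl; have := Fintype.one_lt_card (α := F); omega)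
    exact ⟨2 ^ j - 1, by have := Nat.one_le_two_pow (n := j); rw [pow_succ] at hn; omega⟩
  have h4 : (4 : ZMod (4 ^ n + 1)) ^ n = -1 :=
    eq_neg_of_add_eq_zero_left (by exact_mod_cast ZMod.natCast_self (4 ^ n + 1))
  have hw : ((4 : ZMod (4 ^ n + 1)) ^ 2) ^ n = 1 := by
    rw [← pow_mul, mul_comm, pow_mul, h4, neg_one_sq]
  have huw : (4 : ZMod (4 ^ n + 1))⁻¹ ^ 2 * 4 ^ 2 = 1 := by
    have hunit := (isUnit_pow_iff two_ne_zero).mp (IsUnit.of_pow_eq_one hw hodd.pos.ne')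
    rw [← mul_pow, ZMod.inv_mul_of_unit _ hunit, one_pow]
  have key := traceSignChar_sum_mul_sum (θ := θ) (by omega) (hθ ▸ hw) huw
  simp only [traceSignChar_apply, hθ, Int.cast_pow, Int.cast_neg, Int.cast_one] at key
  simp only [pow_mul, key]
  rw [← (ZMod.natCast_eq_natCast_iff _ _ _).mpr (sum_range_sixteen_pow_modEq hodd)]
  push_cast
  norm_num

theorem m_sequence_gauss_like (k : ℕ) (hk : 2 ≤ k) (F : Type*) [Field F] [Fintype F]
    [Algebra (ZMod 2) F] (hcard : Fintype.card F = 2 ^ k) (n : ℕ) (hn : n = 2 ^ k - 1)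
    (θ : F) (hθ : orderOf θ = n) :
    (∑ l ∈ Finset.range n,
        ((-1 : ZMod (4 ^ n + 1)) ^ (Algebra.trace (ZMod 2) F (θ ^ l)).val *
          ((4 : ZMod (4 ^ n + 1))⁻¹) ^ (2 * l)) ) *
      (∑ l ∈ Finset.range n,
        ((-1 : ZMod (4 ^ n + 1)) ^ (Algebra.trace (ZMod 2) F (θ ^ l)).val *
          (4 : ZMod (4 ^ n + 1)) ^ (2 * l))) =
      (n : ZMod (4 ^ n + 1)) + 1 - (((4 ^ n + 1) / 5 : ℕ) : ZMod (4 ^ n + 1)) :=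
  m_sequence_gauss_like_general k F hcard n hn θ hθ
end

section
/- Let p be an odd prime and π a prime divisor of (4^p + 1)/5 with π ∉ {3, 5}. Then the multiplicative order of 4 modulo π is 2p, and hence 2p divides π - 1. -/
/-!
Since `π ∣ 4 ^ p + 1`, we have `4 ^ p = -1` in `ZMod π`, so `4 ^ (2 * p) = 1`. The order of `4`
is then `2 * p` unless `4 ^ 2 = 1` or `4 ^ p = 1`: the first would make `π` divide `15`, the second
would make `π = 2`, impossible as `4 ^ p + 1` is odd. Fermat's little theorem gives `2 * p ∣ π - 1`.
-/

theorem Nat.eq_mul_of_dvd_mul_of_prime {q p d : ℕ} (hq : q.Prime) (hp : p.Prime) (hd : d ∣ q * p)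
    (hdq : ¬ d ∣ q) (hdp : ¬ d ∣ p) : d = q * p := by
  obtain ⟨a, b, ha, hb, rfl⟩ := Nat.dvd_mul.mp hd
  rcases (Nat.dvd_prime hq).mp ha with rfl | rfl
  · exact absurd (by simpa using hb) hdp
  rcases (Nat.dvd_prime hp).mp hb with rfl | rfl
  · exact absurd (by simp) hdq
  rfl

theorem orderOf_eq_prime_mul_prime {G : Type*} [Monoid G] {x : G} {q p : ℕ} (hq : q.Prime)
    (hp : p.Prime) (hx : x ^ (q * p) = 1) (hxq : x ^ q ≠ 1) (hxp : x ^ p ≠ 1) :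
    orderOf x = q * p :=
  Nat.eq_mul_of_dvd_mul_of_prime hq hp (orderOf_dvd_of_pow_eq_one hx)
    (mt orderOf_dvd_iff_pow_eq_one.mp hxq) (mt orderOf_dvd_iff_pow_eq_one.mp hxp)

theorem five_dvd_four_pow_add_one {n : ℕ} (hn : Odd n) : 5 ∣ 4 ^ n + 1 := by
  simpa using hn.nat_add_dvd_pow_add_pow 4 1

theorem ZMod.four_sq_ne_one {π : ℕ} [hπ : Fact π.Prime] (h3 : π ≠ 3) (h5 : π ≠ 5) :
    (4 : ZMod π) ^ 2 ≠ 1 := by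
  intro h
  have h15 : ((3 * 5 : ℕ) : ZMod π) = 0 := by push_cast; linear_combination h
  rcases hπ.out.dvd_mul.mp ((ZMod.natCast_eq_zero_iff _ _).mp h15) with h | h
  · exact h3 ((Nat.prime_dvd_prime_iff_eq hπ.out Nat.prime_three).mp h)
  · exact h5 ((Nat.prime_dvd_prime_iff_eq hπ.out Nat.prime_five).mp h)

theorem ZMod.pow_eq_neg_one_of_dvd {π a n : ℕ} (h : π ∣ a ^ n + 1) : (a : ZMod π) ^ n = -1 := by
  have h0 : ((a ^ n + 1 : ℕ) : ZMod π) = 0 := (ZMod.natCast_eq_zero_iff _ _).mpr h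
  push_cast at h0
  exact eq_neg_of_add_eq_zero_left h0

theorem order_of_four_mod_prime_divisor (p : ℕ) (hp : p.Prime) (hodd : Odd p)
    (π : ℕ) (hπ : π.Prime) (h3 : π ≠ 3) (h5 : π ≠ 5) (hdvd : π ∣ (4 ^ p + 1) / 5) :
    orderOf (4 : ZMod π) = 2 * p ∧ 2 * p ∣ π - 1 := by
  have := Fact.mk hπ
  have hπ_dvd : π ∣ 4 ^ p + 1 := hdvd.trans (Nat.div_dvd_of_dvd (five_dvd_four_pow_add_one hodd))
  have hπ2 : 2 < π := by
    refine hπ.two_le.lt_of_ne' fun h2 => ?_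
    have : Even (4 ^ p) := (by decide : Even 4).pow_of_ne_zero hp.ne_zero
    exact Nat.even_add_one.mp (even_iff_two_dvd.mpr (h2 ▸ hπ_dvd)) this
  have := Fact.mk hπ2
  have h4p : (4 : ZMod π) ^ p = -1 := by exact_mod_cast ZMod.pow_eq_neg_one_of_dvd hπ_dvd
  have hord : orderOf (4 : ZMod π) = 2 * p :=
    orderOf_eq_prime_mul_prime Nat.prime_two hp (by rw [pow_mul', h4p, neg_one_sq])
      (ZMod.four_sq_ne_one h3 h5) (h4p ▸ ZMod.neg_one_ne_one)
  have h4 : (4 : ZMod π) ≠ 0 := fun h => by simp [h, hp.ne_zero] at h4p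
  exact ⟨hord, hord ▸ ZMod.orderOf_dvd_card_sub_one h4⟩
end

section
/- Let p be an odd prime. Then gcd(2(p+1), (4^p + 1)/5) = 1. -/
/-!
Let `q` be a prime dividing both numbers. Since `4 ^ p + 1` is odd, `q` is odd, so `q ∣ p + 1`
and hence `q ≤ p`. In `ZMod q` we have `4 ^ p = -1`, so the order of `4` divides `2 * p` and
`q - 1 < p`, hence it divides `2`: `q ∣ 4 ^ 2 - 1 = 15`. But `3 ∤ 4 ^ p + 1`, and by lifting the
exponent `25 ∣ 4 ^ p + 1` would force `5 ∣ p`, impossible when `5 ∣ p + 1`.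
-/

theorem ZMod.sq_eq_one_of_pow_prime_eq_neg_one {q p : ℕ} [Fact q.Prime] (hp : p.Prime)
    (hqp : q ≤ p) {x : ZMod q} (hx : x ^ p = -1) : x ^ 2 = 1 := by
  have hq := (Fact.out : q.Prime).two_le
  have hx0 : x ≠ 0 := by
    rintro rfl
    simp [zero_pow hp.ne_zero] at hx
  have h2p : orderOf x ∣ 2 * p :=
    orderOf_dvd_of_pow_eq_one (by rw [pow_mul', hx, neg_one_sq])
  have hq1 : orderOf x ∣ q - 1 := orderOf_dvd_of_pow_eq_one (ZMod.pow_card_sub_one_eq_one hx0)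
  have hp_ndvd : ¬p ∣ orderOf x := fun h => by
    have := Nat.le_of_dvd (by omega) (h.trans hq1)
    omega
  have hcop : (orderOf x).Coprime p := ((hp.coprime_iff_not_dvd).2 hp_ndvd).symm
  exact orderOf_dvd_iff_pow_eq_one.1 (hcop.dvd_of_dvd_mul_right h2p)

theorem dvd_fifteen_of_dvd_four_pow_add_one {p q : ℕ} (hp : p.Prime) (hq : q.Prime) (hqp : q ≤ p)
    (hqA : q ∣ 4 ^ p + 1) : q ∣ 3 * 5 := by
  have : Fact q.Prime := ⟨hq⟩
  have h4 : (4 : ZMod q) ^ p = -1 := by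
    have := (ZMod.natCast_eq_zero_iff (4 ^ p + 1) q).2 hqA
    push_cast at this
    linear_combination this
  rw [← ZMod.natCast_eq_zero_iff]
  push_cast
  linear_combination ZMod.sq_eq_one_of_pow_prime_eq_neg_one hp hqp h4

theorem not_three_dvd_four_pow_add_one (n : ℕ) : ¬3 ∣ 4 ^ n + 1 := by
  rw [Nat.dvd_iff_mod_eq_zero, Nat.add_mod, Nat.pow_mod]
  norm_num

theorem padicValNat_five_four_pow_add_one {n : ℕ} (hn : Odd n) :
    padicValNat 5 (4 ^ n + 1) = 1 + padicValNat 5 n := by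
  have : Fact (Nat.Prime 5) := ⟨by norm_num⟩
  simpa using
    padicValNat.pow_add_pow (p := 5) (x := 4) (y := 1) (by decide) (by norm_num) (by norm_num) hn

theorem not_twentyfive_dvd_four_pow_add_one {n : ℕ} (hn : Odd n) (h5 : ¬5 ∣ n) :
    ¬25 ∣ 4 ^ n + 1 := by
  have : Fact (Nat.Prime 5) := ⟨by norm_num⟩
  rw [show 25 = 5 ^ 2 by rfl, padicValNat_dvd_iff_le (by positivity),
    padicValNat_five_four_pow_add_one hn, padicValNat.eq_zero_of_not_dvd h5]
  norm_num

theorem gcd_two_p_add_one (p : ℕ) (hp : p.Prime) (hodd : Odd p) :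
    Nat.gcd (2 * (p + 1)) ((4 ^ p + 1) / 5) = 1 := by
  obtain ⟨N, hN⟩ := five_dvd_four_pow_add_one hodd
  rw [hN, Nat.mul_div_cancel_left N (by norm_num), Nat.eq_one_iff_not_exists_prime_dvd]
  intro q hq hqgcd
  obtain ⟨hq2p, hqN⟩ := Nat.dvd_gcd_iff.1 hqgcd
  have hqA : q ∣ 4 ^ p + 1 := hN ▸ Dvd.dvd.mul_left hqN 5
  have hq_odd : Odd q := hq.odd_of_ne_two fun h => by
    have : Even (4 ^ p + 1) := even_iff_two_dvd.2 (h ▸ hqA)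
    simp [Nat.even_add_one, Nat.even_pow, hp.ne_zero] at this
  have hqp1 : q ∣ p + 1 :=
    (Nat.coprime_two_right.2 hq_odd).dvd_of_dvd_mul_left hq2p
  have hqp : q ≤ p := by
    have := Nat.le_of_dvd (by omega) hqp1
    rcases hq_odd with ⟨a, rfl⟩
    rcases hodd with ⟨b, rfl⟩
    omega
  have h15 : q ∣ 3 * 5 := dvd_fifteen_of_dvd_four_pow_add_one hp hq hqp hqA
  rcases hq.dvd_mul.1 h15 with h3 | h5
  · rw [(Nat.prime_dvd_prime_iff_eq hq Nat.prime_three).1 h3] at hqA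
    exact not_three_dvd_four_pow_add_one p hqA
  · rw [(Nat.prime_dvd_prime_iff_eq hq Nat.prime_five).1 h5] at hqN hqp1
    exact not_twentyfive_dvd_four_pow_add_one hodd (by omega) (hN ▸ Nat.mul_dvd_mul_left 5 hqN)
end

section
/- Let p ≡ 3 (mod 4) be prime with p ≢ 2 (mod 5), and let S = (4^(2p)-1)/15 - 2. Then gcd(S, 4^p + 1) = 1; if instead p ≡ 2 (mod 5), then gcd(S, 4^p + 1) = 5. -/
/-!
Write `k = (4^(2p) - 1) / 15 = ∑_{i<p} 16^i`, so that `k ≡ p (mod 5)` and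
`15 (k - 2) + 30 = (4^p - 1)(4^p + 1)`. A common divisor of `S = k - 2` and `N = 4^p + 1` therefore
divides `30`, and since `p` is odd, `N ≡ 5 (mod 30)`, so it divides `5`. Hence
`gcd(S, N) = gcd(S, 5) = gcd(p - 2, 5)`.
-/

open Finset

lemma geom_sum_modEq_of_modEq_one {x m : ℤ} (h : x ≡ 1 [ZMOD m]) (n : ℕ) :
    ∑ i ∈ range n, x ^ i ≡ n [ZMOD m] := by
  calc ∑ i ∈ range n, x ^ i ≡ ∑ i ∈ range n, (1 : ℤ) ^ i [ZMOD m] :=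
        Int.ModEq.sum fun i _ => h.pow i
    _ = n := by simp

lemma four_pow_two_mul_sub_one_div_fifteen (n : ℕ) :
    ((4 : ℤ) ^ (2 * n) - 1) / 15 = ∑ i ∈ range n, (16 : ℤ) ^ i := by
  rw [pow_mul, ← geom_sum_mul]
  norm_num

lemma four_pow_modEq_of_odd {n : ℕ} (hn : Odd n) : (4 : ℤ) ^ n ≡ 4 [ZMOD 30] := by
  obtain ⟨m, rfl⟩ := hn
  obtain ⟨c, hc⟩ := sub_one_dvd_pow_sub_one (16 : ℤ) m
  refine Int.modEq_iff_dvd.mpr ⟨-2 * c, ?_⟩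
  rw [pow_succ, pow_mul]
  norm_num at hc ⊢
  linear_combination -4 * hc

lemma gcd_eq_gcd_five_of_mul_add_thirty {a N : ℤ} (M : ℤ) (h : 15 * a + 30 = M * N)
    (hN : N ≡ 5 [ZMOD 30]) : Int.gcd a N = Int.gcd a 5 := by
  have h30 : (30 : ℤ) ∣ N - 5 := Int.modEq_iff_dvd.mp hN.symm
  apply Nat.dvd_antisymm
  · have ha := Int.gcd_dvd_left a N
    have hgN := Int.gcd_dvd_right a N
    have hg30 : (Int.gcd a N : ℤ) ∣ 30 := by
      rw [show (30 : ℤ) = M * N - 15 * a by linarith]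
      exact (dvd_mul_of_dvd_right hgN M).sub (dvd_mul_of_dvd_right ha 15)
    have hg5 : (Int.gcd a N : ℤ) ∣ 5 := by
      rw [show (5 : ℤ) = N - (N - 5) by ring]
      exact hgN.sub (hg30.trans h30)
    exact Int.natCast_dvd_natCast.mp (Int.dvd_coe_gcd ha hg5)
  · have ha := Int.gcd_dvd_left a 5
    have h5 : (Int.gcd a 5 : ℤ) ∣ N := by
      rw [show N = (N - 5) + 5 by ring]
      exact ((Int.gcd_dvd_right a 5).trans ((dvd_mul_left 5 6).trans h30)).add
        (Int.gcd_dvd_right a 5)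
    exact Int.natCast_dvd_natCast.mp (Int.dvd_coe_gcd ha h5)

theorem legendre_gcd_general (p : ℕ) (hp4 : p % 4 = 3) :
    (p % 5 ≠ 2 → Int.gcd (((4 : ℤ) ^ (2 * p) - 1) / 15 - 2) (4 ^ p + 1) = 1) ∧
    (p % 5 = 2 → Int.gcd (((4 : ℤ) ^ (2 * p) - 1) / 15 - 2) (4 ^ p + 1) = 5) := by
  have hodd : Odd p := Nat.odd_iff.mpr (by omega)
  have hkey : 15 * (∑ i ∈ range p, (16 : ℤ) ^ i - 2) + 30 = (4 ^ p - 1) * (4 ^ p + 1) := by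
    have := geom_sum_mul (16 : ℤ) p
    rw [show (16 : ℤ) ^ p = (4 ^ p) ^ 2 by rw [← pow_mul, mul_comm, pow_mul]; norm_num] at this
    linear_combination this
  have hgcd : Int.gcd (((4 : ℤ) ^ (2 * p) - 1) / 15 - 2) (4 ^ p + 1) =
      Int.gcd ((p % 5 : ℕ) + 3) 5 := by
    rw [four_pow_two_mul_sub_one_div_fifteen,
      gcd_eq_gcd_five_of_mul_add_thirty _ hkey ((four_pow_modEq_of_odd hodd).add_right 1),
      ← Int.gcd_emod, ((geom_sum_modEq_of_modEq_one (by decide) p).sub_right 2), ← Int.gcd_emod,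
      ← Int.gcd_emod ((p % 5 : ℕ) + 3)]
    congr 1
    omega
  rw [hgcd]
  have := Nat.mod_lt p (show 5 > 0 by norm_num)
  interval_cases p % 5 <;> decide

theorem legendre_gcd (p : ℕ) (hp : p.Prime) (hp4 : p % 4 = 3) :
    (p % 5 ≠ 2 → Int.gcd (((4 : ℤ) ^ (2 * p) - 1) / 15 - 2) (4 ^ p + 1) = 1) ∧
    (p % 5 = 2 → Int.gcd (((4 : ℤ) ^ (2 * p) - 1) / 15 - 2) (4 ^ p + 1) = 5) :=
  legendre_gcd_general p hp4
end

section
/- Let n be odd and S = (4^(2n)-1)/15. Then S ≡ (4^n+1)/5 (mod 4^n + 1), and gcd(S, 4^n + 1) = (4^n + 1)/5; consequently (4^(2n)-1)/gcd(S, 4^n+1) restricted appropriately gives log_4(5(4^n - 1)) as the 4-adic complexity of w(a,a). -/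
/-!
For odd `n` we have `4 ^ n ≡ 4 [MOD 15]`, say `4 ^ n = 15 k + 4`. Then
`4 ^ n + 1 = 5 (3k + 1)` and `(4 ^ (2n) - 1) / 15 = (5k + 1)(3k + 1)`, and since
`5k + 1 ≡ 1 [MOD 5]` multiplying by `b = 3k + 1` gives both the congruence modulo `5b`
and `gcd((5k + 1) b, 5b) = b`.
-/

theorem Nat.pow_modEq_self_of_odd {q n : ℕ} (hn : Odd n) : q ^ n ≡ q [MOD q ^ 2 - 1] := by
  obtain ⟨t, rfl⟩ := hn
  rcases q.eq_zero_or_pos with rfl | hq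
  · simp [Nat.ModEq]
  have hsq : q ^ 2 ≡ 1 [MOD q ^ 2 - 1] := Nat.modEq_sub (Nat.one_le_pow _ _ hq)
  calc q ^ (2 * t + 1) = (q ^ 2) ^ t * q := by rw [pow_succ, pow_mul]
    _ ≡ 1 ^ t * q [MOD q ^ 2 - 1] := (hsq.pow t).mul_right q
    _ = q := by rw [one_pow, one_mul]

theorem Nat.mul_modEq_of_modEq_one {a b m : ℕ} (h : a ≡ 1 [MOD m]) : a * b ≡ b [MOD m * b] := by
  simpa [mul_comm] using h.mul_right' b

theorem Nat.gcd_mul_of_modEq_one {a b m : ℕ} (h : a ≡ 1 [MOD m]) : Nat.gcd (a * b) (m * b) = b := by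
  rw [Nat.gcd_mul_right, h.gcd_eq, Nat.gcd_one_left, one_mul]

theorem diagonal_case_complexity (n : ℕ) (hn : Odd n) :
    (4 ^ (2 * n) - 1) / 15 ≡ (4 ^ n + 1) / 5 [MOD 4 ^ n + 1] ∧
    Nat.gcd ((4 ^ (2 * n) - 1) / 15) (4 ^ n + 1) = (4 ^ n + 1) / 5 ∧
    (4 ^ (2 * n) - 1) / Nat.gcd ((4 ^ (2 * n) - 1) / 15) (4 ^ n + 1) =
      5 * (4 ^ n - 1) := by
  obtain ⟨k, hk⟩ : ∃ k, 4 ^ n = 15 * k + 4 :=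
    ⟨4 ^ n / 15, by have := Nat.pow_modEq_self_of_odd (q := 4) hn; unfold Nat.ModEq at this; omega⟩
  have hsq : 4 ^ (2 * n) - 1 = 15 * ((5 * k + 1) * (3 * k + 1)) := by
    rw [pow_mul', hk]; ring_nf; omega
  have hS : (4 ^ (2 * n) - 1) / 15 = (5 * k + 1) * (3 * k + 1) := by
    rw [hsq, Nat.mul_div_cancel_left _ (by norm_num)]
  have hM : 4 ^ n + 1 = 5 * (3 * k + 1) := by omega
  have h5 : 5 * k + 1 ≡ 1 [MOD 5] := by unfold Nat.ModEq; omega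
  have hgcd := Nat.gcd_mul_of_modEq_one (b := 3 * k + 1) h5
  rw [hS, hM, Nat.mul_div_cancel_left _ (by norm_num), hgcd, hsq]
  refine ⟨Nat.mul_modEq_of_modEq_one h5, rfl, ?_⟩
  rw [← mul_assoc, Nat.mul_div_cancel _ (by omega)]
  omega
end
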